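/- arXiv:1811.02242 — 4 statements merged into one kernel-verified Lean document; each statement's English description precedes it below -/
import Mathlib

section
/- Let K = Σ_i c_i |f(i)⟩⟨i| be an incoherent Kraus operator on ℂ^d, where f : {0,…,d−1} → {0,…,d−1} and c_i ∈ ℂ. Then for every nonzero vector |ψ⟩ ∈ ℂ^d with K|ψ⟩ ≠ 0, the coherence rank does not increase: R_C(K|ψ⟩) ≤ R_C(|ψ⟩). -/
open scoped BigOperators ComplexOrder Matrix

open Classical in
/-- Coherence rank: number of nonzero coordinates in the fixed basis. -/
noncomputable def cohRank {ι : Type*} [Fintype ι] (ψ : ι → ℂ) : ℕ :=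
  (Finset.univ.filter fun i => ψ i ≠ 0).card

/-- Logarithmic coherence rank. -/
noncomputable def logCohRank {ι : Type*} [Fintype ι] (ψ : ι → ℂ) : ℝ :=
  Real.logb 2 (cohRank ψ)

/-- A density matrix: positive semidefinite with trace one. -/
def IsDensity {ι : Type*} [Fintype ι] (ρ : Matrix ι ι ℂ) : Prop :=
  ρ.PosSemidef ∧ ρ.trace = 1

/-- A pure-state decomposition ρ = ∑ pᵢ |ψᵢ⟩⟨ψᵢ| with pᵢ > 0, ∑ pᵢ = 1 and ψᵢ unit vectors. -/
def IsDecomp {ι : Type*} [Fintype ι] (ρ : Matrix ι ι ℂ) {n : ℕ}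
    (p : Fin n → ℝ) (ψ : Fin n → ι → ℂ) : Prop :=
  (∀ i, 0 < p i) ∧ (∑ i, p i = 1) ∧ (∀ i, ∑ x, ‖ψ i x‖ ^ 2 = 1) ∧
    ρ = ∑ i, (p i : ℂ) • Matrix.vecMulVec (ψ i) (star (ψ i))

/-- Logarithmic coherence number via the convex roof construction. -/
noncomputable def logCohNum {ι : Type*} [Fintype ι] (ρ : Matrix ι ι ℂ) : ℝ :=
  sInf { x | ∃ (n : ℕ) (p : Fin n → ℝ) (ψ : Fin n → ι → ℂ),
    IsDecomp ρ p ψ ∧ x = ∑ i, p i * logCohRank (ψ i) }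

/-- Logarithm of the Schmidt rank of a bipartite vector (rank of its coefficient matrix). -/
noncomputable def logSchmidtRank {ι κ : Type*} [Fintype ι] [Fintype κ]
    (ψ : ι × κ → ℂ) : ℝ :=
  Real.logb 2 ((Matrix.of fun i j => ψ (i, j)).rank)

/-- Logarithmic Schmidt number via the convex roof construction. -/
noncomputable def logSchmidtNum {ι κ : Type*} [Fintype ι] [Fintype κ]
    (ρ : Matrix (ι × κ) (ι × κ) ℂ) : ℝ :=
  sInf { x | ∃ (n : ℕ) (p : Fin n → ℝ) (ψ : Fin n → ι × κ → ℂ),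
    IsDecomp ρ p ψ ∧ x = ∑ i, p i * logSchmidtRank (ψ i) }

/-- An incoherent Kraus operator maps diagonal matrices to diagonal matrices under δ ↦ KδK†. -/
def IsIncoherentKraus {ι : Type*} [Fintype ι] (K : Matrix ι ι ℂ) : Prop :=
  ∀ δ : Matrix ι ι ℂ, δ.IsDiag → (K * δ * Kᴴ).IsDiag

open Function Matrix

/-- The matrix of `∑ᵢ cᵢ |f(i)⟩⟨i|`. -/
def incoherentKraus {ι κ R : Type*} [DecidableEq κ] [Zero R] (f : ι → κ) (c : ι → R) :
    Matrix κ ι R :=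
  of fun j i => if j = f i then c i else 0

theorem support_incoherentKraus_mulVec_subset {ι κ R : Type*} [Fintype ι] [DecidableEq κ]
    [NonUnitalNonAssocSemiring R] (f : ι → κ) (c ψ : ι → R) :
    support (incoherentKraus f c *ᵥ ψ) ⊆ f '' support ψ := by
  intro j hj
  by_contra hj'
  refine hj (Finset.sum_eq_zero fun i _ => ?_)
  by_cases hji : j = f i
  · have hψi : ψ i = 0 := by_contra fun hψi => hj' ⟨i, hψi, hji.symm⟩
    simp [hψi]
  · simp [incoherentKraus, hji]

theorem cohRank_le_of_support_subset_image {ι κ : Type*} [Fintype ι] [Fintype κ]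
    (f : ι → κ) {φ : κ → ℂ} {ψ : ι → ℂ} (h : support φ ⊆ f '' support ψ) :
    cohRank φ ≤ cohRank ψ := by
  classical
  calc cohRank φ ≤ ((Finset.univ.filter fun i => ψ i ≠ 0).image f).card := by
        unfold cohRank
        convert Finset.card_le_card fun j hj => ?_
        obtain ⟨i, hi, rfl⟩ := h (Finset.mem_filter.mp hj).2
        exact Finset.mem_image_of_mem f (Finset.mem_filter.mpr ⟨Finset.mem_univ i, hi⟩)
    _ ≤ cohRank ψ := by
        unfold cohRank
        convert Finset.card_image_le

theorem coherence_rank_incoherent_kraus_general {d : ℕ} (f : Fin d → Fin d) (c : Fin d → ℂ)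
    (K : Matrix (Fin d) (Fin d) ℂ)
    (hK : K = Matrix.of fun j i => if j = f i then c i else 0)
    (ψ : Fin d → ℂ) :
    cohRank (K.mulVec ψ) ≤ cohRank ψ := by
  subst hK
  exact cohRank_le_of_support_subset_image f (support_incoherentKraus_mulVec_subset f c ψ)

/-- an incoherent Kraus operator K = ∑ᵢ cᵢ|f(i)⟩⟨i| does not increase
the coherence rank: R_C(Kψ) ≤ R_C(ψ) whenever ψ ≠ 0 and Kψ ≠ 0. -/
theorem coherence_rank_incoherent_kraus {d : ℕ} (f : Fin d → Fin d) (c : Fin d → ℂ)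
    (K : Matrix (Fin d) (Fin d) ℂ)
    (hK : K = Matrix.of fun j i => if j = f i then c i else 0)
    (ψ : Fin d → ℂ) (hψ : ψ ≠ 0) (hKψ : K.mulVec ψ ≠ 0) :
    cohRank (K.mulVec ψ) ≤ cohRank ψ :=
  coherence_rank_incoherent_kraus_general f c K hK ψ
end

section
/- The logarithmic coherence number is strongly monotone under selective incoherent operations: let ρ be a density matrix on ℂ^d and let {K_n} be a finite family of incoherent Kraus operators with Σ_n K_n†K_n = I. Set q_n = Tr(K_n ρ K_n†) and ρ_n = K_n ρ K_n†/q_n for those n with q_n > 0. Then Σ_n q_n L_C(ρ_n) ≤ L_C(ρ). -/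
open scoped BigOperators ComplexOrder Matrix

/-
Fix a decomposition `ρ = ∑ᵢ pᵢ |ψᵢ⟩⟨ψᵢ|`. Then `KₙρKₙ† = ∑ᵢ pᵢ |Kₙψᵢ⟩⟨Kₙψᵢ|`, so after
normalising, `ρₙ` has the decomposition with weights `pᵢ‖Kₙψᵢ‖²/qₙ` and vectors `Kₙψᵢ/‖Kₙψᵢ‖`,
whence `qₙ L_C(ρₙ) ≤ ∑ᵢ pᵢ‖Kₙψᵢ‖² log R_C(Kₙψᵢ)`. An incoherent Kraus operator has at most one
nonzero entry in each column, so `R_C(Kₙψᵢ) ≤ R_C(ψᵢ)`, and completeness `∑ₙ Kₙ†Kₙ = 1` gives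
`∑ₙ ‖Kₙψᵢ‖² = 1`. Summing over `n` bounds the left side by `∑ᵢ pᵢ log R_C(ψᵢ)`; take the infimum.
-/

open Matrix Finset

section
variable {ι : Type*} [Fintype ι]

lemma logCohRank_nonneg (v : ι → ℂ) : 0 ≤ logCohRank v :=
  div_nonneg (Real.log_natCast_nonneg _) (Real.log_nonneg one_le_two)

lemma logCohRank_le_of_cohRank_le {u v : ι → ℂ} (h : cohRank u ≤ cohRank v) :
    logCohRank u ≤ logCohRank v := by
  rcases (cohRank u).eq_zero_or_pos with h0 | hpos
  · simpa [logCohRank, h0] using logCohRank_nonneg v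
  · exact Real.logb_le_logb_of_le one_lt_two (by exact_mod_cast hpos) (by exact_mod_cast h)

lemma cohRank_smul {c : ℂ} (hc : c ≠ 0) (v : ι → ℂ) : cohRank (c • v) = cohRank v := by
  simp only [cohRank, Pi.smul_apply, smul_eq_mul, ne_eq, mul_eq_zero, hc, false_or]

lemma logCohRank_smul {c : ℂ} (hc : c ≠ 0) (v : ι → ℂ) : logCohRank (c • v) = logCohRank v := by
  rw [logCohRank, logCohRank, cohRank_smul hc]

open Classical in
lemma IsIncoherentKraus.card_col_support_le_one {K : Matrix ι ι ℂ} (hK : IsIncoherentKraus K)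
    (i : ι) : #{j | K j i ≠ 0} ≤ 1 := by
  refine Finset.card_le_one.mpr fun j hj j' hj' => ?_
  by_contra hne
  have h : (K * diagonal (Pi.single i 1) * Kᴴ : Matrix ι ι ℂ) j j' = 0 :=
    hK _ (isDiag_diagonal _) hne
  rw [mul_apply] at h
  simp only [mul_diagonal, conjTranspose_apply, Pi.single_apply] at h
  simp_all

open Classical in
lemma IsIncoherentKraus.cohRank_mulVec_le {K : Matrix ι ι ℂ} (hK : IsIncoherentKraus K)
    (v : ι → ℂ) : cohRank (K *ᵥ v) ≤ cohRank v := by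
  have hsub : ({j | (K *ᵥ v) j ≠ 0} : Finset ι) ⊆
      ({i | v i ≠ 0} : Finset ι).biUnion fun i => {j | K j i ≠ 0} := by
    intro j hj
    obtain ⟨i, -, hi⟩ := Finset.exists_ne_zero_of_sum_ne_zero (mem_filter.mp hj).2
    simp only [Finset.mem_biUnion, Finset.mem_filter, Finset.mem_univ, true_and]
    exact ⟨i, right_ne_zero_of_mul hi, left_ne_zero_of_mul hi⟩
  calc cohRank (K *ᵥ v) ≤ _ := Finset.card_le_card hsub
    _ ≤ cohRank v * 1 := Finset.card_biUnion_le_card_mul _ _ _ fun i _ =>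
        hK.card_col_support_le_one i
    _ = cohRank v := mul_one _

lemma trace_vecMulVec_star_self (u : ι → ℂ) :
    (vecMulVec u (star u)).trace = ((∑ x, ‖u x‖ ^ 2 : ℝ) : ℂ) := by
  simp [dotProduct, Complex.mul_conj']

lemma mul_vecMulVec_star_mul_conjTranspose (K : Matrix ι ι ℂ) (v : ι → ℂ) :
    K * vecMulVec v (star v) * Kᴴ = vecMulVec (K *ᵥ v) (star (K *ᵥ v)) := by
  rw [mul_vecMulVec, vecMulVec_mul, star_mulVec]

lemma sum_sum_norm_sq_mulVec [DecidableEq ι] {κ : Type*} [Fintype κ] {K : κ → Matrix ι ι ℂ}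
    (hK : ∑ n, (K n)ᴴ * K n = 1) (v : ι → ℂ) :
    ∑ n, ∑ x, ‖(K n *ᵥ v) x‖ ^ 2 = ∑ x, ‖v x‖ ^ 2 := by
  have h := congr_arg (fun A => (A * vecMulVec v (star v)).trace) hK
  simp only [sum_mul, trace_sum, Matrix.one_mul, ← trace_mul_cycle,
    mul_vecMulVec_star_mul_conjTranspose, trace_vecMulVec_star_self] at h
  exact_mod_cast h

lemma trace_sum_smul_vecMulVec {σ : Type*} [Fintype σ] (p : σ → ℝ) (u : σ → ι → ℂ) :
    (∑ s, (p s : ℂ) • vecMulVec (u s) (star (u s))).trace =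
      ((∑ s, p s * ∑ x, ‖u s x‖ ^ 2 : ℝ) : ℂ) := by
  simp only [trace_sum, trace_smul, trace_vecMulVec_star_self, smul_eq_mul]
  push_cast
  rfl

lemma logCohNum_le {ρ : Matrix ι ι ℂ} {n : ℕ} {p : Fin n → ℝ} {ψ : Fin n → ι → ℂ}
    (h : IsDecomp ρ p ψ) : logCohNum ρ ≤ ∑ i, p i * logCohRank (ψ i) := by
  refine csInf_le ⟨0, ?_⟩ ⟨n, p, ψ, h, rfl⟩
  rintro _ ⟨n, p, ψ, ⟨hp, -⟩, rfl⟩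
  exact sum_nonneg fun i _ => mul_nonneg (hp i).le (logCohRank_nonneg _)

lemma le_logCohNum {ρ : Matrix ι ι ℂ} {a : ℝ}
    (hρ : ∃ (n : ℕ) (p : Fin n → ℝ) (ψ : Fin n → ι → ℂ), IsDecomp ρ p ψ)
    (h : ∀ (n : ℕ) (p : Fin n → ℝ) (ψ : Fin n → ι → ℂ), IsDecomp ρ p ψ →
      a ≤ ∑ i, p i * logCohRank (ψ i)) :
    a ≤ logCohNum ρ := by
  obtain ⟨n, p, ψ, hd⟩ := hρ
  refine le_csInf ⟨_, n, p, ψ, hd, rfl⟩ ?_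
  rintro _ ⟨n, p, ψ, hd, rfl⟩
  exact h n p ψ hd

lemma sum_equivFin_symm_subtype {σ M : Type*} [Fintype σ] [AddCommMonoid M] (P : σ → Prop)
    [DecidablePred P] (f : σ → M) (hf : ∀ s, ¬P s → f s = 0) :
    ∑ k, f ((Fintype.equivFin (Subtype P)).symm k) = ∑ s, f s := by
  rw [(Fintype.equivFin (Subtype P)).symm.sum_comp (fun t => f t),
    ← Fintype.sum_subtype_add_sum_subtype P f,
    sum_eq_zero fun (t : {s // ¬P s}) _ => hf t t.2, add_zero]

lemma exists_isDecomp_of_eq_sum {σ : Type*} [Fintype σ] {ρ : Matrix ι ι ℂ} {w : σ → ℝ}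
    {v : σ → ι → ℂ} (hw : ∀ s, 0 ≤ w s) (hw1 : ∑ s, w s = 1)
    (hv : ∀ s, w s ≠ 0 → ∑ x, ‖v s x‖ ^ 2 = 1)
    (hρ : ρ = ∑ s, (w s : ℂ) • vecMulVec (v s) (star (v s))) :
    ∃ (n : ℕ) (p : Fin n → ℝ) (ψ : Fin n → ι → ℂ),
      IsDecomp ρ p ψ ∧ ∑ i, p i * logCohRank (ψ i) = ∑ s, w s * logCohRank (v s) := by
  classical
  let e := (Fintype.equivFin {s // w s ≠ 0}).symm
  refine ⟨_, fun k => w (e k), fun k => v (e k),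
    ⟨fun k => (hw _).lt_of_ne' (e k).2, ?_, fun k => hv _ (e k).2, ?_⟩, ?_⟩
  · exact (sum_equivFin_symm_subtype _ w fun _ => not_not.mp).trans hw1
  · exact hρ.trans (sum_equivFin_symm_subtype _ _ fun s h => by simp [not_not.mp h]).symm
  · exact sum_equivFin_symm_subtype _ (fun s => w s * logCohRank (v s)) fun s h => by
      simp [not_not.mp h]

lemma eq_zero_of_sum_norm_sq_eq_zero {u : ι → ℂ} (h : ∑ x, ‖u x‖ ^ 2 = 0) : u = 0 := by
  funext x
  simpa using (sum_eq_zero_iff_of_nonneg fun x _ => sq_nonneg ‖u x‖).mp h x (mem_univ x)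

-- Since `(√0)⁻¹ = 0`, `normalizeVec 0 = 0`; this lets `smul_vecMulVec_normalizeVec` hold for all `u`.
noncomputable def normalizeVec (u : ι → ℂ) : ι → ℂ :=
  (((√(∑ x, ‖u x‖ ^ 2))⁻¹ : ℝ) : ℂ) • u

lemma sum_norm_sq_normalizeVec {u : ι → ℂ} (h : ∑ x, ‖u x‖ ^ 2 ≠ 0) :
    ∑ x, ‖normalizeVec u x‖ ^ 2 = 1 := by
  simp only [normalizeVec, Pi.smul_apply, norm_smul, mul_pow, ← mul_sum, Complex.norm_real,
    Real.norm_eq_abs, sq_abs, inv_pow, Real.sq_sqrt (by positivity : 0 ≤ ∑ x, ‖u x‖ ^ 2),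
    inv_mul_cancel₀ h]

lemma smul_vecMulVec_normalizeVec (u : ι → ℂ) :
    ((∑ x, ‖u x‖ ^ 2 : ℝ) : ℂ) • vecMulVec (normalizeVec u) (star (normalizeVec u)) =
      vecMulVec u (star u) := by
  by_cases h : ∑ x, ‖u x‖ ^ 2 = 0
  · simp [eq_zero_of_sum_norm_sq_eq_zero h]
  · have hsq := Real.sq_sqrt (by positivity : 0 ≤ ∑ x, ‖u x‖ ^ 2)
    simp only [normalizeVec, star_smul, Complex.star_def, Complex.conj_ofReal, smul_vecMulVec,
      vecMulVec_smul, smul_smul]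
    convert one_smul ℂ (vecMulVec u (star u)) using 2
    norm_cast
    rw [← mul_inv, ← sq, hsq, mul_inv_cancel₀ h]

lemma logCohRank_normalizeVec (u : ι → ℂ) : logCohRank (normalizeVec u) = logCohRank u := by
  by_cases h : ∑ x, ‖u x‖ ^ 2 = 0
  · simp [normalizeVec, eq_zero_of_sum_norm_sq_eq_zero h]
  · refine logCohRank_smul ?_ u
    simpa [Real.sqrt_eq_zero (by positivity : 0 ≤ ∑ x, ‖u x‖ ^ 2)] using h

lemma exists_isDecomp_inv_trace_smul {σ : Type*} [Fintype σ] {M : Matrix ι ι ℂ} {p : σ → ℝ}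
    {u : σ → ι → ℂ} (hp : ∀ s, 0 ≤ p s)
    (hM : M = ∑ s, (p s : ℂ) • vecMulVec (u s) (star (u s))) (hq : 0 < M.trace.re) :
    ∃ (n : ℕ) (p' : Fin n → ℝ) (ψ : Fin n → ι → ℂ), IsDecomp ((M.trace.re : ℂ)⁻¹ • M) p' ψ ∧
      M.trace.re * ∑ i, p' i * logCohRank (ψ i) =
        ∑ s, p s * (∑ x, ‖u s x‖ ^ 2) * logCohRank (u s) := by
  set q := M.trace.re
  have hq_eq : q = ∑ s, p s * ∑ x, ‖u s x‖ ^ 2 := by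
    rw [← Complex.ofReal_re (∑ s, _), ← trace_sum_smul_vecMulVec, ← hM]
  obtain ⟨n, p', ψ, hd, hval⟩ := exists_isDecomp_of_eq_sum (ρ := (q : ℂ)⁻¹ • M)
    (w := fun s => p s * (∑ x, ‖u s x‖ ^ 2) / q) (v := fun s => normalizeVec (u s))
    (fun s => div_nonneg (mul_nonneg (hp s) (by positivity)) hq.le)
    (by rw [← sum_div, ← hq_eq, div_self hq.ne'])
    (fun s hs => sum_norm_sq_normalizeVec fun h => hs (by simp [h]))
    (by
      rw [hM, smul_sum]
      refine sum_congr rfl fun s _ => ?_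
      rw [← smul_vecMulVec_normalizeVec (u s), smul_smul, smul_smul]
      congr 1
      push_cast
      field_simp)
  refine ⟨n, p', ψ, hd, ?_⟩
  rw [hval, mul_sum]
  refine sum_congr rfl fun s _ => ?_
  rw [logCohRank_normalizeVec]
  field_simp

lemma trace_re_mul_logCohNum_le {σ : Type*} [Fintype σ] {M : Matrix ι ι ℂ} {p : σ → ℝ}
    {u : σ → ι → ℂ} (hp : ∀ s, 0 ≤ p s)
    (hM : M = ∑ s, (p s : ℂ) • vecMulVec (u s) (star (u s))) (hq : 0 < M.trace.re) :
    M.trace.re * logCohNum ((M.trace.re : ℂ)⁻¹ • M) ≤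
      ∑ s, p s * (∑ x, ‖u s x‖ ^ 2) * logCohRank (u s) := by
  obtain ⟨n, p', ψ, hd, hval⟩ := exists_isDecomp_inv_trace_smul hp hM hq
  exact hval ▸ mul_le_mul_of_nonneg_left (logCohNum_le hd) hq.le

lemma IsDensity.exists_isDecomp {ρ : Matrix ι ι ℂ} (hρ : IsDensity ρ) :
    ∃ (n : ℕ) (p : Fin n → ℝ) (ψ : Fin n → ι → ℂ), IsDecomp ρ p ψ := by
  obtain ⟨m, v, hv⟩ := posSemidef_iff_eq_sum_vecMulVec.mp hρ.1
  have htr : ρ.trace.re = 1 := by simp [hρ.2]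
  obtain ⟨n, p, ψ, hd, -⟩ := exists_isDecomp_inv_trace_smul (p := fun _ => 1) (u := v)
    (fun _ => zero_le_one) (by simpa using hv) (htr ▸ one_pos)
  exact ⟨n, p, ψ, by simpa [htr] using hd⟩

end

/-- C3: strong monotonicity of the logarithmic coherence number under
selective incoherent operations: ∑ₙ qₙ L_C(ρₙ) ≤ L_C(ρ), where qₙ = Tr(KₙρKₙ†),
ρₙ = KₙρKₙ†/qₙ and the sum runs over those n with qₙ > 0. -/
theorem logCohNum_strong_monotone {d : ℕ} (ρ : Matrix (Fin d) (Fin d) ℂ)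
    (hρ : IsDensity ρ) {m : ℕ} (K : Fin m → Matrix (Fin d) (Fin d) ℂ)
    (hinc : ∀ n, IsIncoherentKraus (K n))
    (htp : ∑ n, (K n)ᴴ * K n = 1) :
    ∑ n ∈ Finset.univ.filter (fun n => 0 < (Matrix.trace (K n * ρ * (K n)ᴴ)).re),
        (Matrix.trace (K n * ρ * (K n)ᴴ)).re *
          logCohNum ((((Matrix.trace (K n * ρ * (K n)ᴴ)).re : ℂ))⁻¹ • (K n * ρ * (K n)ᴴ))
      ≤ logCohNum ρ := by
  refine le_logCohNum hρ.exists_isDecomp fun N p ψ ⟨hp, _, hψ, hρψ⟩ => ?_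
  have hKρ (n : Fin m) : K n * ρ * (K n)ᴴ =
      ∑ i, (p i : ℂ) • vecMulVec (K n *ᵥ ψ i) (star (K n *ᵥ ψ i)) := by
    simp only [hρψ, mul_sum, sum_mul, mul_smul_comm, smul_mul_assoc,
      mul_vecMulVec_star_mul_conjTranspose]
  have hweight (n : Fin m) (i : Fin N) : 0 ≤ p i * ∑ x, ‖(K n *ᵥ ψ i) x‖ ^ 2 :=
    mul_nonneg (hp i).le (by positivity)
  calc _ ≤ ∑ n ∈ univ.filter (fun n => 0 < (K n * ρ * (K n)ᴴ).trace.re),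
          ∑ i, p i * (∑ x, ‖(K n *ᵥ ψ i) x‖ ^ 2) * logCohRank (K n *ᵥ ψ i) :=
        sum_le_sum fun n hn =>
          trace_re_mul_logCohNum_le (fun i => (hp i).le) (hKρ n) (mem_filter.mp hn).2
    _ ≤ ∑ n, ∑ i, p i * (∑ x, ‖(K n *ᵥ ψ i) x‖ ^ 2) * logCohRank (K n *ᵥ ψ i) :=
        sum_le_sum_of_subset_of_nonneg (filter_subset _ _) fun n _ _ =>
          sum_nonneg fun i _ => mul_nonneg (hweight n i) (logCohRank_nonneg _)
    _ ≤ ∑ n, ∑ i, p i * (∑ x, ‖(K n *ᵥ ψ i) x‖ ^ 2) * logCohRank (ψ i) := by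
        gcongr with n _ i _
        · exact hweight n i
        · exact logCohRank_le_of_cohRank_le ((hinc n).cohRank_mulVec_le (ψ i))
    _ = ∑ i, p i * logCohRank (ψ i) := by
        rw [sum_comm]
        simp_rw [← sum_mul, ← mul_sum, sum_sum_norm_sq_mulVec htp, hψ, mul_one]
end

section
/- For the noisy maximally coherent states ρ_λ = λ|ψ_M⟩⟨ψ_M| + (1−λ) I/d on ℂ^d, where λ ∈ [0,1] and |ψ_M⟩ = (1/√d) Σ_{j=0}^{d−1} e^{iθ_j}|j⟩ is a maximally coherent state, the logarithmic coherence number is L_C(ρ_λ) = λ log₂ d. -/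
open scoped BigOperators ComplexOrder Matrix

/-!
Testing a decomposition `ρ_λ = ∑ pᵢ |ψᵢ⟩⟨ψᵢ|` against `ψ_M` gives
`∑ pᵢ |⟨ψ_M|ψᵢ⟩|² = λ + (1 - λ)/d`, and Cauchy–Schwarz on the support of `ψᵢ` gives
`d |⟨ψ_M|ψᵢ⟩|² ≤ R_C(ψᵢ)`. Since `log₂` is concave and vanishes at `1`, it lies above its chord
on `[1, d]`: `log₂ R ≥ (R - 1)/(d - 1) · log₂ d`. Averaging these bounds with the weights `pᵢ`
gives `∑ pᵢ log₂ R_C(ψᵢ) ≥ λ log₂ d`, and the decomposition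
`λ |ψ_M⟩⟨ψ_M| + (1 - λ)/d ∑ⱼ |j⟩⟨j|` attains it.
-/

open Matrix

section CoherenceRank

variable {ι : Type*} [Fintype ι]

lemma cohRank_le_card (φ : ι → ℂ) : cohRank φ ≤ Fintype.card ι :=
  Finset.card_filter_le _ _

lemma one_le_cohRank {φ : ι → ℂ} (hφ : φ ≠ 0) : 1 ≤ cohRank φ := by
  obtain ⟨x, hx⟩ := Function.ne_iff.mp hφ
  exact Finset.card_pos.mpr ⟨x, by simpa using hx⟩

lemma cohRank_eq_card {φ : ι → ℂ} (hφ : ∀ x, φ x ≠ 0) : cohRank φ = Fintype.card ι := by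
  simp [cohRank, hφ]

lemma cohRank_single [DecidableEq ι] (x : ι) {c : ℂ} (hc : c ≠ 0) :
    cohRank (Pi.single x c) = 1 := by
  rw [cohRank, Finset.card_eq_one]
  exact ⟨x, by ext y; by_cases h : y = x <;> simp [h, hc]⟩

lemma norm_dotProduct_sq_le_cohRank_mul (u φ : ι → ℂ) :
    ‖star u ⬝ᵥ φ‖ ^ 2 ≤ cohRank φ * ∑ x, ‖u x‖ ^ 2 * ‖φ x‖ ^ 2 := by
  classical
  set s := Finset.univ.filter fun x => φ x ≠ 0
  have h_supp : star u ⬝ᵥ φ = ∑ x ∈ s, star (u x) * φ x :=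
    (Finset.sum_filter_of_ne fun x _ hx => right_ne_zero_of_mul hx).symm
  calc ‖star u ⬝ᵥ φ‖ ^ 2 ≤ (∑ x ∈ s, ‖u x‖ * ‖φ x‖) ^ 2 := by
        rw [h_supp]
        gcongr
        exact (norm_sum_le _ _).trans_eq (by simp)
    _ ≤ s.card * ∑ x ∈ s, (‖u x‖ * ‖φ x‖) ^ 2 := sq_sum_le_card_mul_sum_sq
    _ ≤ cohRank φ * ∑ x, ‖u x‖ ^ 2 * ‖φ x‖ ^ 2 := by
        simp_rw [mul_pow]
        gcongr
        · rfl
        · exact Finset.subset_univ s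

end CoherenceRank

lemma sub_one_div_mul_logb_le_logb {t d : ℝ} (ht : 1 ≤ t) (htd : t ≤ d) :
    (t - 1) / (d - 1) * Real.logb 2 d ≤ Real.logb 2 t := by
  obtain hd | hd := (ht.trans htd).eq_or_lt
  · obtain rfl : t = 1 := le_antisymm (hd ▸ htd) ht
    simp [← hd]
  have hd₁ : 0 < d - 1 := sub_pos.mpr hd
  have hconc := strictConcaveOn_log_Ioi.concaveOn.2 (Set.mem_Ioi.2 one_pos)
    (Set.mem_Ioi.2 (by linarith : (0 : ℝ) < d)) (div_nonneg (sub_nonneg.2 htd) hd₁.le)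
    (div_nonneg (sub_nonneg.2 ht) hd₁.le) (by field_simp; ring)
  have hpt : ((d - t) / (d - 1)) • (1 : ℝ) + ((t - 1) / (d - 1)) • d = t := by
    simp only [smul_eq_mul]; field_simp; ring
  rw [hpt, smul_eq_mul, smul_eq_mul, Real.log_one, mul_zero, zero_add] at hconc
  simp only [Real.logb, ← mul_div_assoc]
  exact div_le_div_of_nonneg_right hconc (Real.log_nonneg one_le_two)

section ConvexRoof

variable {ι : Type*} [Fintype ι]

/-- `logCohNum ρ` is by definition `sInf (roofValues ρ)`. -/
def roofValues (ρ : Matrix ι ι ℂ) : Set ℝ :=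
  { x | ∃ (n : ℕ) (p : Fin n → ℝ) (ψ : Fin n → ι → ℂ),
    IsDecomp ρ p ψ ∧ x = ∑ i, p i * logCohRank (ψ i) }

lemma logCohRank_mem_roofValues {u : ι → ℂ} (hu : ∑ x, ‖u x‖ ^ 2 = 1) :
    logCohRank u ∈ roofValues (vecMulVec u (star u)) :=
  ⟨1, fun _ => 1, fun _ => u, ⟨fun _ => one_pos, by simp, fun _ => hu, by simp⟩, by simp⟩

lemma zero_mem_roofValues_maximallyMixed [DecidableEq ι] [Nonempty ι] :
    0 ∈ roofValues ((Fintype.card ι : ℂ)⁻¹ • (1 : Matrix ι ι ℂ)) := by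
  let e := (Fintype.equivFin ι).symm
  refine ⟨Fintype.card ι, fun _ => (Fintype.card ι : ℝ)⁻¹, fun i => Pi.single (e i) 1,
    ⟨fun _ => by positivity, by simp, fun i => ?_, ?_⟩, ?_⟩
  · simp [Pi.single_apply, apply_ite]
  · simp only [Complex.ofReal_inv, Complex.ofReal_natCast, ← Finset.smul_sum]
    rw [e.sum_comp (fun x => vecMulVec (Pi.single x 1) (star (Pi.single x 1)))]
    simp [← single_eq_single_vecMulVec_single, sum_single_one]
  · simp [logCohRank, cohRank_single]

lemma roofValues_mix {ρ σ : Matrix ι ι ℂ} {a b t : ℝ} (ha : a ∈ roofValues ρ)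
    (hb : b ∈ roofValues σ) (ht₀ : 0 ≤ t) (ht₁ : t ≤ 1) :
    t * a + (1 - t) * b ∈ roofValues ((t : ℂ) • ρ + ((1 - t : ℝ) : ℂ) • σ) := by
  obtain rfl | ht₀ := ht₀.eq_or_lt
  · simpa using hb
  obtain rfl | ht₁ := ht₁.eq_or_lt
  · simpa using ha
  obtain ⟨n, p, ψ, ⟨hp, hp₁, hψ, rfl⟩, rfl⟩ := ha
  obtain ⟨m, q, φ, ⟨hq, hq₁, hφ, rfl⟩, rfl⟩ := hb
  refine ⟨n + m, Fin.append (t • p) ((1 - t) • q), Fin.append ψ φ,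
    ⟨fun i => ?_, ?_, fun i => ?_, ?_⟩, ?_⟩
  · refine Fin.addCases (fun i => ?_) (fun i => ?_) i
    · simpa using mul_pos ht₀ (hp i)
    · simpa using mul_pos (sub_pos.2 ht₁) (hq i)
  · simp [Fin.sum_univ_add, ← Finset.mul_sum, hp₁, hq₁]
  · refine Fin.addCases (fun i => ?_) (fun i => ?_) i <;> simp [hψ, hφ]
  · simp only [Fin.sum_univ_add, Fin.append_left, Fin.append_right, Pi.smul_apply, smul_eq_mul,
      Complex.ofReal_mul, mul_smul, Finset.smul_sum]
  · simp [Fin.sum_univ_add, Finset.mul_sum, mul_assoc]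

end ConvexRoof

section Expectation

variable {ι : Type*} [Fintype ι]

lemma dotProduct_vecMulVec_mulVec_self (u v : ι → ℂ) :
    star u ⬝ᵥ vecMulVec v (star v) *ᵥ u = ((‖star u ⬝ᵥ v‖ ^ 2 : ℝ) : ℂ) := by
  rw [vecMulVec_mulVec, op_smul_eq_smul, dotProduct_smul, smul_eq_mul, star_dotProduct v u,
    Complex.star_def, Complex.conj_mul']
  push_cast
  rfl

lemma IsDecomp.dotProduct_mulVec {ρ : Matrix ι ι ℂ} {n : ℕ} {p : Fin n → ℝ}
    {ψ : Fin n → ι → ℂ} (h : IsDecomp ρ p ψ) (u : ι → ℂ) :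
    star u ⬝ᵥ ρ *ᵥ u = ((∑ i, p i * ‖star u ⬝ᵥ ψ i‖ ^ 2 : ℝ) : ℂ) := by
  simp [h.2.2.2, sum_mulVec, dotProduct_sum, smul_mulVec, dotProduct_smul,
    dotProduct_vecMulVec_mulVec_self]

end Expectation

section NoisyState

variable {ι : Type*} [Fintype ι]

def IsMaximallyCoherent (u : ι → ℂ) : Prop :=
  ∀ x, ‖u x‖ ^ 2 = (Fintype.card ι : ℝ)⁻¹

noncomputable def noisyState [DecidableEq ι] (u : ι → ℂ) (lam : ℝ) : Matrix ι ι ℂ :=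
  (lam : ℂ) • vecMulVec u (star u) + (((1 - lam : ℝ) : ℂ) / Fintype.card ι) • 1

namespace IsMaximallyCoherent

variable [Nonempty ι] {u : ι → ℂ} (hu : IsMaximallyCoherent u)
include hu

lemma sum_norm_sq : ∑ x, ‖u x‖ ^ 2 = 1 := by
  simp [hu _]

lemma cohRank_eq : cohRank u = Fintype.card ι :=
  cohRank_eq_card fun x hx => by simpa [hx, eq_comm] using hu x

lemma card_mul_norm_dotProduct_sq_le {φ : ι → ℂ} (hφ : ∑ x, ‖φ x‖ ^ 2 = 1) :
    Fintype.card ι * ‖star u ⬝ᵥ φ‖ ^ 2 ≤ cohRank φ := by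
  have hcs := norm_dotProduct_sq_le_cohRank_mul u φ
  simp only [hu _, ← Finset.mul_sum, hφ, mul_one] at hcs
  have hd : (0 : ℝ) < Fintype.card ι := by exact_mod_cast Fintype.card_pos
  rwa [← le_div_iff₀' hd, div_eq_mul_inv]

variable [DecidableEq ι]

lemma dotProduct_noisyState_mulVec (lam : ℝ) :
    star u ⬝ᵥ noisyState u lam *ᵥ u = ((lam + (1 - lam) / Fintype.card ι : ℝ) : ℂ) := by
  have hunit : star u ⬝ᵥ u = 1 := by
    simpa [dotProduct, Complex.star_def, Complex.conj_mul'] using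
      congrArg ((↑) : ℝ → ℂ) hu.sum_norm_sq
  simp [noisyState, add_mulVec, smul_mulVec, dotProduct_add, dotProduct_smul,
    dotProduct_vecMulVec_mulVec_self, hunit]

lemma le_of_mem_roofValues {lam x : ℝ} (hx : x ∈ roofValues (noisyState u lam)) :
    lam * Real.logb 2 (Fintype.card ι) ≤ x := by
  obtain ⟨n, p, ψ, hdec, rfl⟩ := hx
  obtain ⟨hp, hp₁, hψ, -⟩ := id hdec
  set D : ℝ := (Fintype.card ι : ℝ)
  set L := Real.logb 2 D
  set f : Fin n → ℝ := fun i => ‖star u ⬝ᵥ ψ i‖ ^ 2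
  have hD : 1 ≤ D := Nat.one_le_cast.mpr Fintype.card_pos
  have hL : 0 ≤ L := Real.logb_nonneg one_lt_two hD
  have hmean : ∑ i, p i * f i = lam + (1 - lam) / D := by
    exact_mod_cast (hdec.dotProduct_mulVec u).symm.trans (hu.dotProduct_noisyState_mulVec lam)
  have hterm : ∀ i, (D * f i - 1) / (D - 1) * L ≤ logCohRank (ψ i) := fun i => by
    have hψ₀ : ψ i ≠ 0 := fun h => by simpa [h] using hψ i
    calc (D * f i - 1) / (D - 1) * L ≤ (cohRank (ψ i) - 1) / (D - 1) * L := by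
          gcongr
          exact hu.card_mul_norm_dotProduct_sq_le (hψ i)
      _ ≤ logCohRank (ψ i) := sub_one_div_mul_logb_le_logb
          (Nat.one_le_cast.mpr (one_le_cohRank hψ₀))
          (Nat.cast_le.mpr (cohRank_le_card (ψ i)))
  calc lam * L = D * L / (D - 1) * ∑ i, p i * f i - L / (D - 1) * ∑ i, p i := by
        rw [hmean, hp₁]
        obtain hD₁ | hD₁ := hD.eq_or_lt
        · simp [L, ← hD₁]
        · field_simp [(sub_pos.2 hD₁).ne']
          ring
    _ = ∑ i, p i * ((D * f i - 1) / (D - 1) * L) := by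
        rw [Finset.mul_sum, Finset.mul_sum, ← Finset.sum_sub_distrib]
        exact Finset.sum_congr rfl fun i _ => by ring
    _ ≤ ∑ i, p i * logCohRank (ψ i) :=
        Finset.sum_le_sum fun i _ => mul_le_mul_of_nonneg_left (hterm i) (hp i).le

lemma mem_roofValues {lam : ℝ} (h₀ : 0 ≤ lam) (h₁ : lam ≤ 1) :
    lam * Real.logb 2 (Fintype.card ι) ∈ roofValues (noisyState u lam) := by
  have hmix := roofValues_mix (logCohRank_mem_roofValues hu.sum_norm_sq)
    (zero_mem_roofValues_maximallyMixed (ι := ι)) h₀ h₁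
  rw [logCohRank, hu.cohRank_eq, mul_zero, add_zero, smul_smul, ← div_eq_mul_inv] at hmix
  exact hmix

lemma logCohNum_noisyState {lam : ℝ} (h₀ : 0 ≤ lam) (h₁ : lam ≤ 1) :
    logCohNum (noisyState u lam) = lam * Real.logb 2 (Fintype.card ι) :=
  IsLeast.csInf_eq ⟨hu.mem_roofValues h₀ h₁, fun _ => hu.le_of_mem_roofValues⟩

end IsMaximallyCoherent

end NoisyState

lemma isMaximallyCoherent_phases (d : ℕ) (θ : Fin d → ℝ) :
    IsMaximallyCoherent fun j : Fin d =>
      ((Real.sqrt d)⁻¹ : ℂ) * Complex.exp ((θ j : ℂ) * Complex.I) := fun j => by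
  simp [Complex.norm_exp_ofReal_mul_I]

/-- for the noisy maximally coherent states
ρ_λ = λ|ψ_M⟩⟨ψ_M| + (1−λ)I/d with |ψ_M⟩ = (1/√d)∑ⱼ e^{iθⱼ}|j⟩, the logarithmic
coherence number is L_C(ρ_λ) = λ log₂ d. -/
theorem logCohNum_noisy_max_coherent (d : ℕ) (hd : 0 < d) (θ : Fin d → ℝ)
    (lam : ℝ) (h0 : 0 ≤ lam) (h1 : lam ≤ 1) :
    logCohNum
        ((lam : ℂ) • Matrix.vecMulVec
            (fun j : Fin d => ((Real.sqrt d)⁻¹ : ℂ) * Complex.exp ((θ j : ℂ) * Complex.I))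
            (star fun j : Fin d => ((Real.sqrt d)⁻¹ : ℂ) * Complex.exp ((θ j : ℂ) * Complex.I))
          + (((1 - lam : ℝ) : ℂ) / d) • (1 : Matrix (Fin d) (Fin d) ℂ))
      = lam * Real.logb 2 d := by
  have : Nonempty (Fin d) := ⟨⟨0, hd⟩⟩
  simpa [noisyState] using (isMaximallyCoherent_phases d θ).logCohNum_noisyState h0 h1
end

section
/- There exists an isometry W : ℂ^d → ℂ^d⊗ℂ^d (namely W = U(I⊗|0⟩⟨0|) restricted accordingly, with U the generalized CNOT unitary, so that W|i⟩ = |i⟩⊗|i⟩ for every fixed-basis state |i⟩) such that for every density matrix ρ on ℂ^d, the logarithmic coherence number of ρ equals the logarithmic Schmidt number of WρW†: L_C(ρ) = L_E(WρW†). -/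
open scoped BigOperators ComplexOrder Matrix

/-!
Let `W` be the copy isometry `|i⟩ ↦ |i⟩|i⟩`. The coefficient matrix of `W ψ` is the diagonal
matrix `diag ψ`, so its Schmidt rank is the coherence rank of `ψ`. Conjugation by an isometry turns
pure-state decompositions of `ρ` into those of `W ρ W†` made of vectors in the range of `W`, and
back. Every pure-state decomposition of `W ρ W†` is of this kind: its vectors vanish wherever the
diagonal of `W ρ W†` does, i.e. off the basis vectors `|i⟩|i⟩`. Hence both convex roofs range over
the same set of values.
-/

open Matrix

section Decomposition

variable {ι κ : Type*} [Fintype ι] [Fintype κ]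

lemma ofReal_sum_norm_sq_eq_star_dotProduct (v : ι → ℂ) :
    ((∑ x, ‖v x‖ ^ 2 : ℝ) : ℂ) = star v ⬝ᵥ v := by
  push_cast
  simp [dotProduct, Complex.conj_mul']

lemma IsDecomp.apply_self {ρ : Matrix ι ι ℂ} {n : ℕ} {p : Fin n → ℝ} {ψ : Fin n → ι → ℂ}
    (h : IsDecomp ρ p ψ) (x : ι) : ρ x x = ((∑ i, p i * ‖ψ i x‖ ^ 2 : ℝ) : ℂ) := by
  rw [h.2.2.2]
  push_cast
  simp [Matrix.sum_apply, vecMulVec_apply, Complex.mul_conj']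

lemma IsDecomp.apply_eq_zero {ρ : Matrix ι ι ℂ} {n : ℕ} {p : Fin n → ℝ} {ψ : Fin n → ι → ℂ}
    (h : IsDecomp ρ p ψ) {x : ι} (hx : ρ x x = 0) (i : Fin n) : ψ i x = 0 := by
  rw [h.apply_self, Complex.ofReal_eq_zero,
    Finset.sum_eq_zero_iff_of_nonneg fun j _ => mul_nonneg (h.1 j).le (sq_nonneg _)] at hx
  simpa [(h.1 i).ne'] using hx i (Finset.mem_univ i)

variable [DecidableEq ι] {W : Matrix κ ι ℂ}

lemma sum_norm_sq_mulVec_of_isometry (hW : Wᴴ * W = 1) (v : ι → ℂ) :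
    ∑ x, ‖(W *ᵥ v) x‖ ^ 2 = ∑ x, ‖v x‖ ^ 2 := by
  apply Complex.ofReal_injective
  rw [ofReal_sum_norm_sq_eq_star_dotProduct, ofReal_sum_norm_sq_eq_star_dotProduct, star_mulVec,
    ← dotProduct_mulVec, mulVec_mulVec, hW, one_mulVec]

lemma isometry_conj_inj (hW : Wᴴ * W = 1) {ρ σ : Matrix ι ι ℂ} :
    W * ρ * Wᴴ = W * σ * Wᴴ ↔ ρ = σ := by
  refine ⟨fun h => ?_, fun h => h ▸ rfl⟩
  simpa [Matrix.mul_assoc, ← Matrix.mul_assoc Wᴴ, hW] using congr_arg (fun M => Wᴴ * M * W) h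

omit [Fintype κ] [DecidableEq ι] in
lemma conj_vecMulVec_star (v : ι → ℂ) :
    W * vecMulVec v (star v) * Wᴴ = vecMulVec (W *ᵥ v) (star (W *ᵥ v)) := by
  rw [mul_vecMulVec, vecMulVec_mul, star_mulVec]

lemma isDecomp_isometry_conj_iff (hW : Wᴴ * W = 1) {ρ : Matrix ι ι ℂ} {n : ℕ}
    {p : Fin n → ℝ} {ψ : Fin n → ι → ℂ} :
    IsDecomp (W * ρ * Wᴴ) p (fun i => W *ᵥ ψ i) ↔ IsDecomp ρ p ψ := by
  have hsum : ∑ i, (p i : ℂ) • vecMulVec (W *ᵥ ψ i) (star (W *ᵥ ψ i))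
      = W * (∑ i, (p i : ℂ) • vecMulVec (ψ i) (star (ψ i))) * Wᴴ := by
    simp [Matrix.mul_sum, Matrix.sum_mul, conj_vecMulVec_star]
  simp only [IsDecomp, sum_norm_sq_mulVec_of_isometry hW, hsum, isometry_conj_inj hW]

end Decomposition

section CopyIsometry

variable {ι : Type*} [Fintype ι] [DecidableEq ι]

variable (ι) in
def copyIsometry : Matrix (ι × ι) ι ℂ :=
  of fun x i => if x = (i, i) then 1 else 0

lemma copyIsometry_mulVec (v : ι → ℂ) :
    copyIsometry ι *ᵥ v = fun x => if x.1 = x.2 then v x.1 else 0 := by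
  ext ⟨a, b⟩
  simp [copyIsometry, mulVec, dotProduct, Prod.ext_iff, ite_and, eq_comm]

lemma copyIsometry_mul_apply {α : Type*} (M : Matrix ι α ℂ) (a b : ι) (j : α) :
    (copyIsometry ι * M) (a, b) j = if a = b then M a j else 0 := by
  simp [copyIsometry, mul_apply, Prod.ext_iff, ite_and, eq_comm]

lemma mul_conjTranspose_copyIsometry_apply {α : Type*} (M : Matrix α ι ℂ) (j : α) (a b : ι) :
    (M * (copyIsometry ι)ᴴ) j (a, b) = if a = b then M j a else 0 := by
  simp [copyIsometry, mul_apply, Prod.ext_iff, ite_and, eq_comm, apply_ite (starRingEnd ℂ)]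

lemma conjTranspose_copyIsometry_mul_self : (copyIsometry ι)ᴴ * copyIsometry ι = 1 := by
  ext i j
  simp [copyIsometry, mul_apply, Prod.ext_iff, ite_and, eq_comm, apply_ite (starRingEnd ℂ),
    one_apply, Fintype.sum_prod_type]

lemma copyIsometry_conj_apply (ρ : Matrix ι ι ℂ) (a b c e : ι) :
    (copyIsometry ι * ρ * (copyIsometry ι)ᴴ) (a, b) (c, e)
      = if a = b ∧ c = e then ρ a c else 0 := by
  rw [mul_conjTranspose_copyIsometry_apply, copyIsometry_mul_apply, ite_and]
  split_ifs <;> rfl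

lemma logSchmidtRank_copyIsometry_mulVec (v : ι → ℂ) :
    logSchmidtRank (copyIsometry ι *ᵥ v) = logCohRank v := by
  have hdiag : (of fun a b => (copyIsometry ι *ᵥ v) (a, b)) = diagonal v := by
    ext a b
    simp [copyIsometry_mulVec, diagonal_apply]
  rw [logSchmidtRank, logCohRank, cohRank, hdiag, rank_diagonal, Fintype.card_subtype]

lemma IsDecomp.eq_copyIsometry_mulVec {ρ : Matrix ι ι ℂ} {n : ℕ} {p : Fin n → ℝ}
    {φ : Fin n → ι × ι → ℂ} (h : IsDecomp (copyIsometry ι * ρ * (copyIsometry ι)ᴴ) p φ)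
    (i : Fin n) : φ i = copyIsometry ι *ᵥ fun a => φ i (a, a) := by
  ext ⟨a, b⟩
  rw [copyIsometry_mulVec]
  by_cases hab : a = b
  · simp [hab]
  · simp only [hab, if_false]
    exact h.apply_eq_zero (by simp [copyIsometry_conj_apply, hab]) i

lemma logCohNum_eq_logSchmidtNum_copyIsometry_conj (ρ : Matrix ι ι ℂ) :
    logCohNum ρ = logSchmidtNum (copyIsometry ι * ρ * (copyIsometry ι)ᴴ) := by
  have hW := conjTranspose_copyIsometry_mul_self (ι := ι)
  rw [logCohNum, logSchmidtNum]
  congr 1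
  ext x
  constructor
  · rintro ⟨n, p, ψ, hψ, rfl⟩
    exact ⟨n, p, _, (isDecomp_isometry_conj_iff hW).2 hψ,
      by simp [logSchmidtRank_copyIsometry_mulVec]⟩
  · rintro ⟨n, p, φ, hφ, rfl⟩
    obtain ⟨χ, rfl⟩ : ∃ χ : Fin n → ι → ℂ, φ = fun i => copyIsometry ι *ᵥ χ i :=
      ⟨_, funext hφ.eq_copyIsometry_mulVec⟩
    exact ⟨n, p, _, (isDecomp_isometry_conj_iff hW).1 hφ,
      by simp [logSchmidtRank_copyIsometry_mulVec]⟩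

end CopyIsometry

/-- there is an isometry W : ℂ^d → ℂ^d ⊗ ℂ^d with W|i⟩ = |i⟩⊗|i⟩ such
that L_C(ρ) = L_E(WρW†) for every density matrix ρ. -/
theorem exists_isometry_coherence_eq_entanglement (d : ℕ) :
    ∃ W : Matrix (Fin d × Fin d) (Fin d) ℂ,
      Wᴴ * W = 1 ∧
      (∀ i : Fin d, W.mulVec (Pi.single i 1)
          = fun x : Fin d × Fin d => if x = (i, i) then 1 else 0) ∧
      ∀ ρ : Matrix (Fin d) (Fin d) ℂ, IsDensity ρ →
        logCohNum ρ = logSchmidtNum (W * ρ * Wᴴ) := by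
  refine ⟨copyIsometry (Fin d), conjTranspose_copyIsometry_mul_self, fun i => ?_,
    fun ρ _ => logCohNum_eq_logSchmidtNum_copyIsometry_conj ρ⟩
  ext x
  simp [copyIsometry]
end
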